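/- Let X be a length space, p ∈ X, and R > 0, ε > 0. For any two points q₁, q₂ in the closed ball B(p,R), the distance between q₁ and q₂ in the metric of X equals their distance in the intrinsic (induced length) metric of the closed ball B(p, 2R+ε). In particular, the restricted metric on B(p,R) from X coincides with the intrinsic metric of B(p,2R+ε) restricted to B(p,R). -/

import Mathlib

open Metric Set

/-- The length of a path, as the extended-real total variation of the map. -/
noncomputable def pathLength {X : Type*} [PseudoMetricSpace X] {x y : X} (γ : Path x y) :
    ENNReal :=
  eVariationOn (fun t => γ t) Set.univ

/-- The induced (intrinsic) length pseudo-distance on a subset `A` of a metric space: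
the infimum of lengths of continuous paths joining the two points and staying inside `A`. -/
noncomputable def intrinsicEDist {X : Type*} [PseudoMetricSpace X] (A : Set X) (x y : X) :
    ENNReal :=
  ⨅ (γ : Path x y) (_ : Set.range (fun t => γ t) ⊆ A), pathLength γ

/-- A metric space is a length space if its distance is the induced length metric. -/
def IsLengthSpace (X : Type*) [PseudoMetricSpace X] : Prop :=
  ∀ x y : X, edist x y = intrinsicEDist Set.univ x y

/-!
Since `d(q₁, q₂) ≤ 2R`, the length structure gives paths from `q₁` to `q₂` of length
`ℓ < 2R + ε` and arbitrarily close to `d(q₁, q₂)`. Each point `z` of such a path satisfies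
`d(q₁, z) + d(z, q₂) ≤ ℓ`, so `z` lies within `ℓ / 2` of `q₁` or of `q₂`, hence within
`R + ℓ / 2 < 2R + ε` of `p`: the path never leaves the ball `B(p, 2R + ε)`.
-/

theorem mem_closedBall_of_dist_add_dist_le {X : Type*} [PseudoMetricSpace X] {p x y z : X}
    {R ℓ : ℝ} (hx : x ∈ closedBall p R) (hy : y ∈ closedBall p R)
    (hz : dist x z + dist z y ≤ ℓ) : z ∈ closedBall p (R + ℓ / 2) := by
  rw [mem_closedBall] at *
  linarith [dist_triangle z x p, dist_triangle z y p, dist_comm x z]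

section PathLength

variable {X : Type*} [PseudoMetricSpace X] {x y : X}

theorem edist_add_edist_le_pathLength (γ : Path x y) (t : unitInterval) :
    edist x (γ t) + edist (γ t) y ≤ pathLength γ := by
  have h₀ : edist (γ 0) (γ t) ≤ eVariationOn (fun s => γ s) (Icc 0 t) :=
    eVariationOn.edist_le _ ⟨le_rfl, unitInterval.nonneg'⟩ ⟨unitInterval.nonneg', le_rfl⟩
  have h₁ : edist (γ t) (γ 1) ≤ eVariationOn (fun s => γ s) (Icc t 1) :=
    eVariationOn.edist_le _ ⟨le_rfl, unitInterval.le_one'⟩ ⟨unitInterval.le_one', le_rfl⟩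
  rw [γ.source, γ.target] at *
  calc edist x (γ t) + edist (γ t) y
      ≤ eVariationOn (fun s => γ s) (Icc 0 t) + eVariationOn (fun s => γ s) (Icc t 1) :=
        add_le_add h₀ h₁
    _ = eVariationOn (fun s => γ s) (Icc 0 t ∪ Icc t 1) :=
        (eVariationOn.union _ (isGreatest_Icc unitInterval.nonneg')
          (isLeast_Icc unitInterval.le_one')).symm
    _ ≤ pathLength γ := eVariationOn.mono _ (subset_univ _)

theorem edist_le_pathLength (γ : Path x y) : edist x y ≤ pathLength γ :=
  (edist_triangle x (γ 0) y).trans (edist_add_edist_le_pathLength γ 0)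

theorem edist_le_intrinsicEDist (A : Set X) : edist x y ≤ intrinsicEDist A x y :=
  le_iInf₂ fun γ _ => edist_le_pathLength γ

theorem range_subset_closedBall_add_half_pathLength {p : X} {R : ℝ} (γ : Path x y)
    (hγ : pathLength γ ≠ ⊤) (hx : x ∈ closedBall p R) (hy : y ∈ closedBall p R) :
    range γ ⊆ closedBall p (R + (pathLength γ).toReal / 2) := by
  rintro _ ⟨t, rfl⟩
  refine mem_closedBall_of_dist_add_dist_le hx hy ?_
  rw [dist_edist, dist_edist, ← ENNReal.toReal_add (edist_ne_top _ _) (edist_ne_top _ _)]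
  exact ENNReal.toReal_mono hγ (edist_add_edist_le_pathLength γ t)

end PathLength

theorem IsLengthSpace.exists_path_pathLength_lt {X : Type*} [PseudoMetricSpace X]
    (hX : IsLengthSpace X) {x y : X} {c : ENNReal} (hc : edist x y < c) :
    ∃ γ : Path x y, pathLength γ < c := by
  rw [hX, intrinsicEDist] at hc
  obtain ⟨γ, hγ⟩ := iInf_lt_iff.1 hc
  exact ⟨γ, by rwa [iInf_pos (subset_univ _)] at hγ⟩

theorem restricted_eq_intrinsic_on_smaller_ball_general
    {X : Type*} [MetricSpace X] (hX : IsLengthSpace X)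
    (p : X) (R ε : ℝ) (hε : 0 < ε)
    (q₁ q₂ : X) (h₁ : q₁ ∈ Metric.closedBall p R) (h₂ : q₂ ∈ Metric.closedBall p R) :
    edist q₁ q₂ = intrinsicEDist (Metric.closedBall p (2 * R + ε)) q₁ q₂ := by
  refine le_antisymm (edist_le_intrinsicEDist _) (le_of_forall_gt fun c hc => ?_)
  have hq : edist q₁ q₂ < ENNReal.ofReal (2 * R + ε) := by
    rw [edist_lt_ofReal]
    rw [mem_closedBall] at h₁ h₂
    linarith [dist_triangle_right q₁ q₂ p]
  obtain ⟨γ, hγ⟩ := hX.exists_path_pathLength_lt (lt_min hc hq)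
  have hγ_short : pathLength γ < ENNReal.ofReal (2 * R + ε) := hγ.trans_le (min_le_right _ _)
  have hγ_ball : range γ ⊆ closedBall p (2 * R + ε) := by
    refine (range_subset_closedBall_add_half_pathLength γ hγ_short.ne_top h₁ h₂).trans
      (closedBall_subset_closedBall ?_)
    linarith [ENNReal.toReal_lt_of_lt_ofReal hγ_short]
  exact (iInf₂_le γ hγ_ball).trans_lt (hγ.trans_le (min_le_left _ _))

/-- In a length space `X`, for `p ∈ X`, `R > 0`, `ε > 0`, the distance
between any two points of the closed ball `B(p,R)` in the metric of `X` equals their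
distance in the intrinsic (induced length) metric of the closed ball `B(p, 2R+ε)`. -/
theorem restricted_eq_intrinsic_on_smaller_ball
    {X : Type*} [MetricSpace X] (hX : IsLengthSpace X)
    (p : X) (R ε : ℝ) (hR : 0 < R) (hε : 0 < ε)
    (q₁ q₂ : X) (h₁ : q₁ ∈ Metric.closedBall p R) (h₂ : q₂ ∈ Metric.closedBall p R) :
    edist q₁ q₂ = intrinsicEDist (Metric.closedBall p (2 * R + ε)) q₁ q₂ :=
  restricted_eq_intrinsic_on_smaller_ball_general hX p R ε hε q₁ q₂ h₁ h₂
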